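/- The Gaussian log-max conformal set equals the minimum-distance (PCP) conformal set: let d ≥ 1, M ≥ 1, σ > 0, α ∈ (0,1). For i = 1, …, N let Y_i ∈ ℝ^d and Ŷ_i^1, …, Ŷ_i^M ∈ ℝ^d, and let Ŷ_*^1, …, Ŷ_*^M ∈ ℝ^d be a test ensemble. Define minimum-distance scores s_i := min_{1≤m≤M} ‖Y_i − Ŷ_i^m‖ and Gaussian log-max scores t_i := −log( max_{1≤m≤M} (1/M) N(Y_i; Ŷ_i^m, σ²I) ). Then { y ∈ ℝ^d : −log( max_{1≤m≤M} (1/M) N(y; Ŷ_*^m, σ²I) ) ≤ Q_{1−α}(t_1, …, t_N, +∞) } = { y ∈ ℝ^d : min_{1≤m≤M} ‖y − Ŷ_*^m‖ ≤ Q_{1−α}(s_1, …, s_N, +∞) }. -/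

import Mathlib

/-! The Gaussian density is a decreasing function of the distance to its mean, so
`-log max_m (1/M) N(y; Ŷᵐ, σ²I) = c + (min_m ‖y - Ŷᵐ‖)² / (2σ²)` with `c` independent of `y`.
Extending `x ↦ c + x² / (2σ²)` from `[0, ∞)` to the order isomorphism `x ↦ c + x|x| / (2σ²)`
of `ℝ`, the two conformal sets agree because empirical quantiles commute with every order
isomorphism `φ` of `ℝ`: `#{i | φ sᵢ ≤ φ r} = #{i | sᵢ ≤ r}`. -/

open MeasureTheory

/-- Empirical `β`-quantile of extended-real values `z 1, …, z m`:
`inf { x ∈ ℝ : (1/m) · #{ i : z i ≤ x } ≥ β }`, with `inf ∅ = +∞` (in `EReal`). -/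
noncomputable def empQuantile {m : ℕ} (z : Fin m → EReal) (β : ℝ) : EReal :=
  sInf ((fun r : ℝ => (r : EReal)) ''
    {r : ℝ | β ≤ ((Finset.univ.filter (fun i => z i ≤ (r : EReal))).card : ℝ) / m})

/-- The empirical `β`-quantile of the `n + 1` values `z 1, …, z n, +∞`. -/
noncomputable def augQuantile {n : ℕ} (z : Fin n → ℝ) (β : ℝ) : EReal :=
  empQuantile (Fin.snoc (fun i => ((z i : ℝ) : EReal)) ⊤) β

/-- The isotropic Gaussian density `N(y; μ, σ²I)` on `ℝ^d`. -/
noncomputable def gaussDensity (d : ℕ) (σ : ℝ) (μ y : EuclideanSpace ℝ (Fin d)) : ℝ :=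
  (2 * Real.pi * σ ^ 2) ^ (-(d : ℝ) / 2) * Real.exp (-‖y - μ‖ ^ 2 / (2 * σ ^ 2))

open Finset Real

section Quantile

variable {n : ℕ}

lemma card_filter_snoc_top_le (s : Fin n → ℝ) (r : ℝ) :
    #{j | (Fin.snoc (fun i => (s i : EReal)) ⊤ : Fin (n + 1) → EReal) j ≤ r} =
      #{i | s i ≤ r} := by
  rw [card_filter, card_filter, Fin.sum_univ_castSucc]
  simp

lemma coe_le_augQuantile_iff (s : Fin n → ℝ) (β x : ℝ) :
    (x : EReal) ≤ augQuantile s β ↔ ∀ r : ℝ, β ≤ #{i | s i ≤ r} / (n + 1 : ℝ) → x ≤ r := by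
  simp only [augQuantile, empQuantile, le_sInf_iff, Set.forall_mem_image, Set.mem_ofPred_eq,
    card_filter_snoc_top_le, EReal.coe_le_coe_iff]
  push_cast
  rfl

lemma OrderIso.coe_le_augQuantile_comp_iff (φ : ℝ ≃o ℝ) (s : Fin n → ℝ) (β x : ℝ) :
    (φ x : EReal) ≤ augQuantile (fun i => φ (s i)) β ↔ (x : EReal) ≤ augQuantile s β := by
  rw [coe_le_augQuantile_iff, coe_le_augQuantile_iff, φ.surjective.forall]
  simp only [φ.le_iff_le]

end Quantile

def signedSq (x : ℝ) : ℝ := x * |x|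

lemma strictMono_signedSq : StrictMono signedSq := by
  intro a b hab
  rcases le_total 0 a with ha | ha <;> rcases le_total 0 b with hb | hb <;>
    simp only [signedSq, abs_of_nonneg, abs_of_nonpos, *] <;>
    nlinarith [mul_pos (sub_pos.2 hab) (sub_pos.2 hab)]

lemma surjective_signedSq : Function.Surjective signedSq := by
  intro r
  rcases le_total 0 r with hr | hr
  · exact ⟨√r, by rw [signedSq, abs_of_nonneg (sqrt_nonneg r), mul_self_sqrt hr]⟩
  · exact ⟨-√(-r), by
      rw [signedSq, abs_neg, abs_of_nonneg (sqrt_nonneg _), neg_mul,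
        mul_self_sqrt (neg_nonneg.2 hr), neg_neg]⟩

noncomputable def signedSqOrderIso : ℝ ≃o ℝ :=
  StrictMono.orderIsoOfSurjective signedSq strictMono_signedSq surjective_signedSq

noncomputable def gaussScoreIso (d : ℕ) {σ : ℝ} (hσ : σ ≠ 0) (a : ℝ) : ℝ ≃o ℝ :=
  signedSqOrderIso.trans ((OrderIso.mulRight₀ (2 * σ ^ 2)⁻¹ (by positivity)).trans
    (OrderIso.addLeft (-log (a * (2 * π * σ ^ 2) ^ (-(d : ℝ) / 2)))))

section Gaussian

variable {d : ℕ} {σ : ℝ} (hσ : σ ≠ 0) {a : ℝ}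

lemma gaussScoreIso_apply (x : ℝ) :
    gaussScoreIso d hσ a x =
      -log (a * (2 * π * σ ^ 2) ^ (-(d : ℝ) / 2)) + signedSq x * (2 * σ ^ 2)⁻¹ :=
  rfl

lemma mul_gaussDensity_eq_exp (ha : 0 < a) (μ y : EuclideanSpace ℝ (Fin d)) :
    a * gaussDensity d σ μ y = exp (-gaussScoreIso d hσ a ‖y - μ‖) := by
  have hc : 0 < a * (2 * π * σ ^ 2) ^ (-(d : ℝ) / 2) := by positivity
  rw [gaussScoreIso_apply, neg_add, neg_neg, exp_add, exp_log hc, signedSq, abs_norm,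
    gaussDensity, ← mul_assoc]
  congr 2
  ring

lemma neg_log_iSup_mul_gaussDensity {ι : Type*} [Finite ι] [Nonempty ι] (ha : 0 < a)
    (μ : ι → EuclideanSpace ℝ (Fin d)) (y : EuclideanSpace ℝ (Fin d)) :
    -log (⨆ m, a * gaussDensity d σ (μ m) y) = gaussScoreIso d hσ a (⨅ m, ‖y - μ m‖) := by
  have hanti : Antitone fun r => exp (-gaussScoreIso d hσ a r) :=
    fun r s hrs => exp_le_exp.2 (neg_le_neg ((gaussScoreIso d hσ a).monotone hrs))
  have hcont : Continuous fun r => exp (-gaussScoreIso d hσ a r) :=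
    continuous_exp.comp (gaussScoreIso d hσ a).continuous.neg
  simp_rw [mul_gaussDensity_eq_exp hσ ha]
  rw [← hanti.map_ciInf_of_continuousAt hcont.continuousAt (Set.finite_range _).bddBelow, log_exp,
    neg_neg]

end Gaussian

theorem stmt17_general (d M N : ℕ) (hM : 1 ≤ M)
    (σ : ℝ) (hσ : 0 < σ) (α : ℝ)
    (Y : Fin N → EuclideanSpace ℝ (Fin d))
    (Yhat : Fin N → Fin M → EuclideanSpace ℝ (Fin d))
    (Ystar : Fin M → EuclideanSpace ℝ (Fin d)) :
    {y : EuclideanSpace ℝ (Fin d) |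
        ((-Real.log (⨆ m, (1 / (M : ℝ)) * gaussDensity d σ (Ystar m) y) : ℝ) : EReal) ≤
          augQuantile (fun i : Fin N =>
            -Real.log (⨆ m, (1 / (M : ℝ)) * gaussDensity d σ (Yhat i m) (Y i))) (1 - α)} =
      {y : EuclideanSpace ℝ (Fin d) |
        (((⨅ m, ‖y - Ystar m‖) : ℝ) : EReal) ≤
          augQuantile (fun i : Fin N => ⨅ m, ‖Y i - Yhat i m‖) (1 - α)} := by
  have : Nonempty (Fin M) := Fin.pos_iff_nonempty.mp hM
  have hweight : (0 : ℝ) < 1 / M := by positivity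
  ext y
  simp only [Set.mem_ofPred_eq, neg_log_iSup_mul_gaussDensity hσ.ne' hweight]
  exact (gaussScoreIso d hσ.ne' _).coe_le_augQuantile_comp_iff _ _ _

/-- The Gaussian log-max conformal set equals the minimum-distance (PCP) conformal
set: calibrating the negative log-max Gaussian-kernel score at level `1 - α` yields
exactly the same prediction set as calibrating the minimum-distance score. -/
theorem stmt17 (d M N : ℕ) (hd : 1 ≤ d) (hM : 1 ≤ M)
    (σ : ℝ) (hσ : 0 < σ) (α : ℝ) (hα : α ∈ Set.Ioo (0 : ℝ) 1)
    (Y : Fin N → EuclideanSpace ℝ (Fin d))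
    (Yhat : Fin N → Fin M → EuclideanSpace ℝ (Fin d))
    (Ystar : Fin M → EuclideanSpace ℝ (Fin d)) :
    {y : EuclideanSpace ℝ (Fin d) |
        ((-Real.log (⨆ m, (1 / (M : ℝ)) * gaussDensity d σ (Ystar m) y) : ℝ) : EReal) ≤
          augQuantile (fun i : Fin N =>
            -Real.log (⨆ m, (1 / (M : ℝ)) * gaussDensity d σ (Yhat i m) (Y i))) (1 - α)} =
      {y : EuclideanSpace ℝ (Fin d) |
        (((⨅ m, ‖y - Ystar m‖) : ℝ) : EReal) ≤
          augQuantile (fun i : Fin N => ⨅ m, ‖Y i - Yhat i m‖) (1 - α)} :=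
  stmt17_general d M N hM σ hσ α Y Yhat Ystar
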